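/- (Correctness of the similarity-relation encoding.) Fix AP, a set of actions Act ⊆ AP, A ⊆ Act, and three trace copies indexed by path variables π, ρ, σ. Let τ ∈ (2^{AP × {π,ρ,σ}})^ω be the combined trace of three traces t_π, t_ρ, t_σ ∈ (2^AP)^ω, i.e., τ[i] = {(p,v) | v ∈ {π,ρ,σ}, p ∈ t_v[i]}. Consider the LTL-with-past formula ◇⁻( (¬Y⊤) ∧ □[ ⋀_{p ∈ Act∖A} (p_σ ↔ p_π) ∧ ⋀_{p ∈ A} ((p_σ ↮ p_π) → (p_ρ ↮ p_π)) ] ), where p_v abbreviates the proposition (p,v). Then for every time point i: τ,i ⊨ this formula if and only if t_σ =_{Act∖A} t_π and t_σ ≤^A_{t_π} t_ρ. -/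

import Mathlib

/-- Syntax of LTL with past over atomic propositions `Q` (with primitive truth `tt`). -/
inductive LTL (Q : Type*) where
  | tt : LTL Q
  | atom : Q → LTL Q
  | neg : LTL Q → LTL Q
  | or : LTL Q → LTL Q → LTL Q
  | next : LTL Q → LTL Q
  | prev : LTL Q → LTL Q
  | untl : LTL Q → LTL Q → LTL Q
  | since : LTL Q → LTL Q → LTL Q

namespace LTL

variable {Q : Type*}

/-- Semantics of LTL with past on a trace `τ` at time point `i`. -/
def sat : LTL Q → (ℕ → Set Q) → ℕ → Prop
  | .tt, _, _ => True
  | .atom p, τ, i => p ∈ τ i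
  | .neg φ, τ, i => ¬ sat φ τ i
  | .or φ ψ, τ, i => sat φ τ i ∨ sat ψ τ i
  | .next φ, τ, i => sat φ τ (i + 1)
  | .prev φ, τ, i => 0 < i ∧ sat φ τ (i - 1)
  | .untl φ ψ, τ, i => ∃ k, i ≤ k ∧ sat ψ τ k ∧ ∀ j, i ≤ j → j < k → sat φ τ j
  | .since φ ψ, τ, i => ∃ g, g ≤ i ∧ sat ψ τ g ∧ ∀ h, g ≤ h → h < i → sat φ τ h

/-- Derived conjunction. -/
def and (φ ψ : LTL Q) : LTL Q := .neg (.or (.neg φ) (.neg ψ))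

/-- Derived implication. -/
def impl (φ ψ : LTL Q) : LTL Q := .or (.neg φ) ψ

/-- Derived biimplication `φ ↔ ψ`. -/
def biim (φ ψ : LTL Q) : LTL Q := and (impl φ ψ) (impl ψ φ)

/-- Derived exclusive or `φ ↮ ψ`. -/
def niff (φ ψ : LTL Q) : LTL Q := .neg (biim φ ψ)

/-- Derived `Once` operator `◇⁻`. -/
def once (φ : LTL Q) : LTL Q := .since .tt φ

/-- Derived `Historically` operator `□⁻`. -/
def hist (φ : LTL Q) : LTL Q := .neg (once (.neg φ))

/-- Derived `Globally` operator `□`. -/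
def glob (φ : LTL Q) : LTL Q := .neg (.untl .tt (.neg φ))

/-- Finite conjunction. -/
def bigAnd (l : List (LTL Q)) : LTL Q := l.foldr and .tt

/-- Finite disjunction. -/
def bigOr (l : List (LTL Q)) : LTL Q := l.foldr .or (.neg .tt)

end LTL

/-- `π =_A π′` : agreement on `A` at every time point. -/
def agreeOn {AP : Type*} (A : Set AP) (π π' : ℕ → Set AP) : Prop :=
  ∀ i, π i ∩ A = π' i ∩ A

/-- `π ⊕_A π′` : trace-wide symmetric difference restricted to `A`. -/
def symDiff {AP : Type*} (A : Set AP) (π π' : ℕ → Set AP) : Set (AP × ℕ) :=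
  { q | q.1 ∈ A ∧ q.1 ∈ (π q.2 \ π' q.2) ∪ (π' q.2 \ π q.2) }

/-- `π′ ≤^A_{base} π″` : `π′` is at least as similar to `base` as `π″`, over `A`. -/
def simLE {AP : Type*} (A : Set AP) (base π' π'' : ℕ → Set AP) : Prop :=
  symDiff A π' base ⊆ symDiff A π'' base


/-!
The past part `◇⁻(¬Y⊤ ∧ ·)` can only be witnessed at time `0`, so the formula says that the
`□`-body holds at every time point. Pointwise, the body over `Act ∖ A` is agreement of `σ` and `π`,
and the body over `A` says that every position where `σ` differs from `π` is one where `ρ` differs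
from `π`, which is membership-wise inclusion of the symmetric differences.
-/

namespace LTL

variable {Q : Type*} (φ ψ : LTL Q) (τ : ℕ → Set Q) (i : ℕ)

@[simp]
theorem sat_and : (and φ ψ).sat τ i ↔ φ.sat τ i ∧ ψ.sat τ i := by
  simp [and, sat]

@[simp]
theorem sat_impl : (impl φ ψ).sat τ i ↔ (φ.sat τ i → ψ.sat τ i) := by
  simp [impl, sat, imp_iff_not_or]

@[simp]
theorem sat_biim : (biim φ ψ).sat τ i ↔ (φ.sat τ i ↔ ψ.sat τ i) := by
  simp [biim, iff_def]

@[simp]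
theorem sat_niff : (niff φ ψ).sat τ i ↔ ¬(φ.sat τ i ↔ ψ.sat τ i) := by
  simp [niff, sat]

theorem sat_bigAnd (l : List (LTL Q)) : (bigAnd l).sat τ i ↔ ∀ φ ∈ l, φ.sat τ i := by
  induction l with
  | nil => simp [bigAnd, sat]
  | cons φ l ih => simp [bigAnd, ← ih]

@[simp]
theorem sat_bigAnd_map {B : Type*} (l : List B) (f : B → LTL Q) :
    (bigAnd (l.map f)).sat τ i ↔ ∀ b ∈ l, (f b).sat τ i := by
  simp [sat_bigAnd]

theorem sat_glob : (glob φ).sat τ i ↔ ∀ k, i ≤ k → φ.sat τ k := by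
  simp only [glob, sat, not_exists, not_and, not_forall]
  exact ⟨fun h k hk => by_contra fun hφ => (h k hk hφ).elim fun _ ⟨_, _, h⟩ => h trivial,
    fun h k hk hφ => (hφ (h k hk)).elim⟩

/-- `¬Y⊤` holds exactly at the initial position. -/
theorem sat_once_initial_and : (once (and (neg (prev tt)) φ)).sat τ i ↔ φ.sat τ 0 := by
  simp only [once, sat_and, sat, not_lt, Nat.le_zero, implies_true, and_true]
  exact ⟨fun ⟨g, _, hg, hφ⟩ => hg ▸ hφ, fun hφ => ⟨0, Nat.zero_le i, rfl, hφ⟩⟩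

end LTL

theorem agreeOn_iff {AP : Type*} (B : Set AP) (π π' : ℕ → Set AP) :
    agreeOn B π π' ↔ ∀ i, ∀ p ∈ B, (p ∈ π i ↔ p ∈ π' i) := by
  simp only [agreeOn, Set.ext_iff, Set.mem_inter_iff]
  exact forall_congr' fun i => ⟨fun h p hp => by simpa [hp] using h p,
    fun h p => and_congr_left fun hp => h p hp⟩

theorem mem_symDiff {AP : Type*} (A : Set AP) (π π' : ℕ → Set AP) (p : AP) (i : ℕ) :
    (p, i) ∈ symDiff A π π' ↔ p ∈ A ∧ ¬(p ∈ π i ↔ p ∈ π' i) := by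
  simp only [symDiff, Set.mem_ofPred_eq, Set.mem_union, Set.mem_sdiff]
  tauto

theorem simLE_iff {AP : Type*} (A : Set AP) (base π' π'' : ℕ → Set AP) :
    simLE A base π' π'' ↔
      ∀ i, ∀ p ∈ A, ¬(p ∈ π' i ↔ p ∈ base i) → ¬(p ∈ π'' i ↔ p ∈ base i) := by
  simp only [simLE, Set.subset_def, Prod.forall, mem_symDiff, and_imp]
  exact ⟨fun h i p hp hd => (h p i hp hd).2, fun h p i hp hd => ⟨hp, h i p hp hd⟩⟩

/-- The trace copies are indexed by `Fin 3`, with `0 = π`, `1 = ρ`, `2 = σ`. -/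
theorem similarity_encoding_correct_general {AP : Type} [DecidableEq AP]
    (Act A : Finset AP)
    (t : Fin 3 → ℕ → Set AP) (i : ℕ) :
    LTL.sat
      (LTL.once (LTL.and (LTL.neg (LTL.prev LTL.tt))
        (LTL.glob (LTL.and
          (LTL.bigAnd ((Act \ A).toList.map fun p =>
            LTL.biim (LTL.atom (p, (2 : Fin 3))) (LTL.atom (p, (0 : Fin 3)))))
          (LTL.bigAnd (A.toList.map fun p =>
            LTL.impl
              (LTL.niff (LTL.atom (p, (2 : Fin 3))) (LTL.atom (p, (0 : Fin 3))))
              (LTL.niff (LTL.atom (p, (1 : Fin 3))) (LTL.atom (p, (0 : Fin 3))))))))))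
      (fun j => { q : AP × Fin 3 | q.1 ∈ t q.2 j }) i
    ↔ (agreeOn ((↑Act : Set AP) \ ↑A) (t 2) (t 0) ∧
        simLE (↑A : Set AP) (t 0) (t 2) (t 1)) := by
  rw [LTL.sat_once_initial_and, LTL.sat_glob, agreeOn_iff, simLE_iff]
  simp only [Nat.zero_le, true_implies, LTL.sat_and, LTL.sat_bigAnd_map, LTL.sat_biim,
    LTL.sat_impl, LTL.sat_niff, LTL.sat, Set.mem_ofPred_eq, Finset.mem_toList, Set.mem_sdiff,
    Finset.mem_coe, Finset.mem_sdiff, and_imp]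
  exact forall_and

/-- correctness of the similarity-relation encoding. The trace copies are
indexed by `Fin 3`, with `0 = π`, `1 = ρ`, `2 = σ`. -/
theorem similarity_encoding_correct {AP : Type} [DecidableEq AP]
    (Act A : Finset AP) (hA : A ⊆ Act)
    (t : Fin 3 → ℕ → Set AP) (i : ℕ) :
    LTL.sat
      (LTL.once (LTL.and (LTL.neg (LTL.prev LTL.tt))
        (LTL.glob (LTL.and
          (LTL.bigAnd ((Act \ A).toList.map fun p =>
            LTL.biim (LTL.atom (p, (2 : Fin 3))) (LTL.atom (p, (0 : Fin 3)))))
          (LTL.bigAnd (A.toList.map fun p =>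
            LTL.impl
              (LTL.niff (LTL.atom (p, (2 : Fin 3))) (LTL.atom (p, (0 : Fin 3))))
              (LTL.niff (LTL.atom (p, (1 : Fin 3))) (LTL.atom (p, (0 : Fin 3))))))))))
      (fun j => { q : AP × Fin 3 | q.1 ∈ t q.2 j }) i
    ↔ (agreeOn ((↑Act : Set AP) \ ↑A) (t 2) (t 0) ∧
        simLE (↑A : Set AP) (t 0) (t 2) (t 1)) :=
  similarity_encoding_correct_general Act A t i
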